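/- Let F : ℝⁿ → S^m be continuously differentiable, monotonically non-increasing and convex on the positive orthant, let 0 < a ≤ b, and let x, y ∈ [a,b]ⁿ be points at which the quantitative injectivity estimates ‖F'(x)d‖₂ ≥ λ_x‖d‖_∞ and ‖F'(y)d‖₂ ≥ λ_y‖d‖_∞ hold for all d ∈ ℝⁿ with constants λ_x, λ_y > 0 defined as λ_z = min_j λ_max(F'(z)(e_j' - e_j)). Then ‖F(x) - F(y)‖₂ ≥ λ‖x - y‖_∞ with λ := min{λ_x, λ_y} > 0. -/

import Mathlib

open Matrix

attribute [local instance] Matrix.frobeniusNormedAddCommGroup Matrix.frobeniusNormedSpace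

/-- Largest eigenvalue (for symmetric matrices, the supremum of the spectrum). -/
noncomputable def lamMax {m : ℕ} (A : Matrix (Fin m) (Fin m) ℝ) : ℝ :=
  sSup (spectrum ℝ A)

/-- Spectral norm of a symmetric matrix: `max (λ_max A) (λ_max (-A))`. -/
noncomputable def specNorm {m : ℕ} (A : Matrix (Fin m) (Fin m) ℝ) : ℝ :=
  max (lamMax A) (lamMax (-A))

/-- Loewner order: `Loewner A B` means `A ⪯ B`. -/
def Loewner {m : ℕ} (A B : Matrix (Fin m) (Fin m) ℝ) : Prop :=
  (B - A).PosSemidef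

/-- The `j`-th standard unit vector `e_j`. -/
noncomputable def eVec (n : ℕ) (j : Fin n) : Fin n → ℝ := Pi.single j (1:ℝ)

/-- The negated unit vector `e_j' = 𝟙 - e_j`. -/
noncomputable def eVec' (n : ℕ) (j : Fin n) : Fin n → ℝ := fun i => 1 - eVec n j i

/-- Maximum norm `‖d‖_∞`. -/
noncomputable def infNorm {n : ℕ} (d : Fin n → ℝ) : ℝ := ⨆ i, |d i|

/-! If `j` maximises `|x j - y j| =: s` and, say, `x j ≥ y j`, then `d = y - x` satisfies
`d ≤ s • (e_j' - e_j)`. Monotonicity and convexity at `x` give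
`s • F'(x)(e_j' - e_j) ⪯ F'(x) d ⪯ F y - F x`, and since `λ_max` is Loewner-monotone and positively
homogeneous, `s λ_x ≤ λ_max (F y - F x) ≤ ‖F x - F y‖₂`. For `x j ≤ y j` exchange `x` and `y`. -/

variable {m : ℕ}

lemma Loewner.trans {A B C : Matrix (Fin m) (Fin m) ℝ} (hAB : Loewner A B) (hBC : Loewner B C) :
    Loewner A C := by
  simpa only [Loewner, sub_add_sub_cancel] using hBC.add hAB

lemma Loewner.isHermitian_left {A B : Matrix (Fin m) (Fin m) ℝ} (h : Loewner A B)
    (hB : B.IsHermitian) : A.IsHermitian := by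
  simpa only [sub_sub_cancel] using hB.sub h.isHermitian

lemma lamMax_le_iff_loewner [Nonempty (Fin m)] {A : Matrix (Fin m) (Fin m) ℝ} (hA : A.IsHermitian)
    (c : ℝ) : lamMax A ≤ c ↔ Loewner A (algebraMap ℝ _ c) := by
  have hne : (spectrum ℝ A).Nonempty :=
    hA.spectrum_real_eq_range_eigenvalues ▸ Set.range_nonempty _
  rw [lamMax, csSup_le_iff A.finite_real_spectrum.bddAbove hne, Loewner,
    posSemidef_iff_isHermitian_and_spectrum_nonneg, ← spectrum.singleton_sub_eq]
  have hcA : (algebraMap ℝ (Matrix (Fin m) (Fin m) ℝ) c - A).IsHermitian :=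
    ((IsSelfAdjoint.all c).algebraMap _).sub hA
  simp only [hcA, true_and, Set.singleton_sub, Set.subset_def, Set.forall_mem_image,
    Set.mem_ofPred_eq, sub_nonneg]

lemma lamMax_mono [Nonempty (Fin m)] {A B : Matrix (Fin m) (Fin m) ℝ} (hB : B.IsHermitian)
    (h : Loewner A B) : lamMax A ≤ lamMax B :=
  (lamMax_le_iff_loewner (h.isHermitian_left hB) _).2 <|
    h.trans ((lamMax_le_iff_loewner hB _).1 le_rfl)

lemma lamMax_smul [Nonempty (Fin m)] (A : Matrix (Fin m) (Fin m) ℝ) {t : ℝ} (ht : 0 ≤ t) :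
    lamMax (t • A) = t * lamMax A := by
  rcases ht.eq_or_lt with rfl | ht
  · simp [lamMax, spectrum.zero_eq]
  · have := spectrum.unit_smul_eq_smul (R := ℝ) A (Units.mk0 t ht.ne')
    simp only [Units.smul_def, Units.val_mk0] at this
    rw [lamMax, lamMax, this, Real.sSup_smul_of_nonneg ht.le, smul_eq_mul]

lemma loewner_apply_of_le {E 𝓕 : Type*} [AddCommGroup E] [PartialOrder E] [IsOrderedAddMonoid E]
    [FunLike 𝓕 E (Matrix (Fin m) (Fin m) ℝ)] [AddMonoidHomClass 𝓕 E (Matrix (Fin m) (Fin m) ℝ)]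
    {G : 𝓕} (hG : ∀ δ, 0 ≤ δ → Loewner (G δ) 0) {u v : E} (huv : u ≤ v) :
    Loewner (G v) (G u) := by
  simpa only [Loewner, map_sub, zero_sub, neg_sub] using hG (v - u) (sub_nonneg.2 huv)

lemma eVec'_sub_eVec_apply {n : ℕ} (j i : Fin n) :
    (eVec' n j - eVec n j) i = if i = j then -1 else 1 := by
  by_cases h : i = j
  · subst h; simp [eVec', eVec]
  · simp [eVec', eVec, h]

lemma le_smul_eVec'_sub_eVec {n : ℕ} {d : Fin n → ℝ} {s : ℝ} {j : Fin n} (hd : ∀ i, d i ≤ s)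
    (hdj : d j = -s) : d ≤ s • (eVec' n j - eVec n j) := by
  intro i
  rw [Pi.smul_apply, eVec'_sub_eVec_apply, smul_eq_mul]
  split_ifs with h
  · subst h; linarith
  · linarith [hd i]

lemma abs_le_infNorm {n : ℕ} (d : Fin n → ℝ) (i : Fin n) : |d i| ≤ infNorm d :=
  le_ciSup (f := fun i => |d i|) (Finite.bddAbove_range _) i

lemma exists_abs_eq_infNorm {n : ℕ} [Nonempty (Fin n)] (d : Fin n → ℝ) :
    ∃ j, |d j| = infNorm d := by
  obtain ⟨j, hj⟩ := Finite.exists_max (fun i => |d i|)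
  exact ⟨j, le_antisymm (abs_le_infNorm d j) (ciSup_le hj)⟩

lemma infNorm_sub_comm {n : ℕ} (x y : Fin n → ℝ) : infNorm (x - y) = infNorm (y - x) := by
  unfold infNorm
  congr 1 with i
  exact abs_sub_comm _ _

lemma iInf_lamMax_mul_infNorm_le_lamMax [Nonempty (Fin m)] {n : ℕ}
    {G : (Fin n → ℝ) →L[ℝ] Matrix (Fin m) (Fin m) ℝ} (hG : ∀ δ, 0 ≤ δ → Loewner (G δ) 0)
    {d : Fin n → ℝ} {j : Fin n} (hdj : d j = -infNorm d)
    {Q : Matrix (Fin m) (Fin m) ℝ} (hQ : Q.IsHermitian) (hGQ : Loewner (G d) Q) :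
    (⨅ k, lamMax (G (eVec' n k - eVec n k))) * infNorm d ≤ lamMax Q := by
  set s := infNorm d
  have hd : ∀ i, d i ≤ s := fun i => (le_abs_self _).trans (abs_le_infNorm d i)
  have hs : 0 ≤ s := by linarith [hd j]
  have hdescent : Loewner (s • G (eVec' n j - eVec n j)) Q := by
    rw [← map_smul]
    exact (loewner_apply_of_le hG (le_smul_eVec'_sub_eVec hd hdj)).trans hGQ
  calc (⨅ k, lamMax (G (eVec' n k - eVec n k))) * s
      ≤ lamMax (G (eVec' n j - eVec n j)) * s :=
        mul_le_mul_of_nonneg_right (ciInf_le (Finite.bddBelow_range _) j) hs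
    _ = lamMax (s • G (eVec' n j - eVec n j)) := by rw [lamMax_smul _ hs, mul_comm]
    _ ≤ lamMax Q := lamMax_mono hQ hdescent

theorem stmt1_general {n m : ℕ} (hn : 2 ≤ n) (hm : 2 ≤ m)
    (F : (Fin n → ℝ) → Matrix (Fin m) (Fin m) ℝ)
    (F' : (Fin n → ℝ) → (Fin n → ℝ) →L[ℝ] Matrix (Fin m) (Fin m) ℝ)
    (hsym : ∀ z, (F z).IsHermitian)
    (hmono : ∀ z, (∀ i, 0 < z i) → ∀ δ : Fin n → ℝ, 0 ≤ δ → Loewner (F' z δ) 0)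
    (hconv : ∀ z w, (∀ i, 0 < z i) → (∀ i, 0 < w i) →
      Loewner (F' z (w - z)) (F w - F z))
    (a b : ℝ) (ha : 0 < a)
    (x y : Fin n → ℝ) (hx : ∀ i, x i ∈ Set.Icc a b) (hy : ∀ i, y i ∈ Set.Icc a b) :
    specNorm (F x - F y) ≥
      min (⨅ j : Fin n, lamMax (F' x (eVec' n j - eVec n j)))
          (⨅ j : Fin n, lamMax (F' y (eVec' n j - eVec n j))) * infNorm (x - y) := by
  have : Nonempty (Fin m) := ⟨⟨0, by omega⟩⟩
  have : Nonempty (Fin n) := ⟨⟨0, by omega⟩⟩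
  have hxpos : ∀ i, 0 < x i := fun i => ha.trans_le (hx i).1
  have hypos : ∀ i, 0 < y i := fun i => ha.trans_le (hy i).1
  obtain ⟨j, hj⟩ := exists_abs_eq_infNorm (x - y)
  have hs : 0 ≤ infNorm (x - y) := hj ▸ abs_nonneg _
  rcases le_total 0 ((x - y) j) with hxy | hxy
  · have key := iInf_lamMax_mul_infNorm_le_lamMax (hmono x hxpos) (d := y - x) (j := j)
      (by rw [← infNorm_sub_comm, ← hj, abs_of_nonneg hxy, ← neg_sub x y, Pi.neg_apply])
      ((hsym y).sub (hsym x)) (hconv x y hxpos hypos)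
    calc _ ≤ (⨅ j : Fin n, lamMax (F' x (eVec' n j - eVec n j))) * infNorm (x - y) :=
          mul_le_mul_of_nonneg_right (min_le_left _ _) hs
      _ ≤ lamMax (-(F x - F y)) := by rwa [neg_sub, infNorm_sub_comm]
      _ ≤ specNorm (F x - F y) := le_max_right _ _
  · have key := iInf_lamMax_mul_infNorm_le_lamMax (hmono y hypos) (d := x - y) (j := j)
      (by rw [← hj, abs_of_nonpos hxy, neg_neg]) ((hsym x).sub (hsym y)) (hconv y x hypos hxpos)
    calc _ ≤ (⨅ j : Fin n, lamMax (F' y (eVec' n j - eVec n j))) * infNorm (x - y) :=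
          mul_le_mul_of_nonneg_right (min_le_right _ _) hs
      _ ≤ lamMax (F x - F y) := key
      _ ≤ specNorm (F x - F y) := le_max_left _ _

theorem stmt1 {n m : ℕ} (hn : 2 ≤ n) (hm : 2 ≤ m)
    (F : (Fin n → ℝ) → Matrix (Fin m) (Fin m) ℝ)
    (F' : (Fin n → ℝ) → (Fin n → ℝ) →L[ℝ] Matrix (Fin m) (Fin m) ℝ)
    (hdiff : ∀ z, (∀ i, 0 < z i) → HasFDerivAt F (F' z) z)
    (hcont : ContinuousOn F' {z | ∀ i, 0 < z i})
    (hsym : ∀ z, (F z).IsHermitian)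
    (hmono : ∀ z, (∀ i, 0 < z i) → ∀ δ : Fin n → ℝ, 0 ≤ δ → Loewner (F' z δ) 0)
    (hconv : ∀ z w, (∀ i, 0 < z i) → (∀ i, 0 < w i) →
      Loewner (F' z (w - z)) (F w - F z))
    (a b : ℝ) (ha : 0 < a) (hab : a ≤ b)
    (x y : Fin n → ℝ) (hx : ∀ i, x i ∈ Set.Icc a b) (hy : ∀ i, y i ∈ Set.Icc a b)
    (hlamx : 0 < (⨅ j : Fin n, lamMax (F' x (eVec' n j - eVec n j))))
    (hlamy : 0 < (⨅ j : Fin n, lamMax (F' y (eVec' n j - eVec n j))))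
    (hestx : ∀ d : Fin n → ℝ,
      specNorm (F' x d) ≥ (⨅ j : Fin n, lamMax (F' x (eVec' n j - eVec n j))) * infNorm d)
    (hesty : ∀ d : Fin n → ℝ,
      specNorm (F' y d) ≥ (⨅ j : Fin n, lamMax (F' y (eVec' n j - eVec n j))) * infNorm d) :
    specNorm (F x - F y) ≥
      min (⨅ j : Fin n, lamMax (F' x (eVec' n j - eVec n j)))
          (⨅ j : Fin n, lamMax (F' y (eVec' n j - eVec n j))) * infNorm (x - y) :=
  stmt1_general hn hm F F' hsym hmono hconv a b ha x y hx hy
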